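/- Let w be a word over a linearly ordered alphabet and m the maximum length of a plateau-k-rollercoaster subsequence of w. Then the map sending each maximum-length plateau-k-rollercoaster subsequence (as a word) to its unique embedding index sequence is a bijection between the set of maximum-length plateau-k-rollercoaster subsequences of w and the set of index sequences i_1 < ... < i_m in w for which w[i_1]...w[i_m] is a plateau-k-rollercoaster. In particular, the number of maximum-length plateau-k-rollercoaster subsequences equals the number of such index sequences. -/

import Mathlib

/-!
Doubling a letter of a plateau-`k`-rollercoaster gives a plateau-`k`-rollercoaster: the maximal
runs of the longer word are those of the shorter one, with the doubled letter repeated inside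
one of them, and repeating a letter changes neither monotonicity nor the set of letters.
If a maximum-length rollercoaster had two embeddings `I ≠ J` into `w`, say with `I[d] < J[d]`,
then `I[0..d]` followed by `J[d..]` would embed that word with its `d`-th letter doubled, a
longer rollercoaster. Hence spelling is injective on these embeddings; it is onto because every
subsequence has an embedding.
-/

namespace RollerCoaster

abbrev Word := List ℕ

def weakIncr (u : Word) : Prop := u.Chain' (· ≤ ·)

def weakDecr (u : Word) : Prop := u.Chain' (· ≥ ·)

def plateauRun (u : Word) : Prop := weakIncr u ∨ weakDecr u

/-- The factor `w[i..j]` (0-indexed, inclusive). -/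
def factorAt (w : Word) (i j : ℕ) : Word := (w.drop i).take (j + 1 - i)

/-- `w[i..j]` is a maximal plateau-run: weakly monotone and not extendable
to a weakly monotone factor in either direction. -/
def maxRunAt (w : Word) (i j : ℕ) : Prop :=
  i ≤ j ∧ j < w.length ∧ plateauRun (factorAt w i j) ∧
  (i = 0 ∨ ¬ plateauRun (factorAt w (i - 1) j)) ∧
  (j + 1 = w.length ∨ ¬ plateauRun (factorAt w i (j + 1)))

/-- Number of distinct letters of a word. -/
def distinctCount (u : Word) : ℕ := u.dedup.length

/-- `w` is a plateau-`k`-rollercoaster: every maximal plateau-run contains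
at least `k` distinct letters. -/
def IsPlateauRC (k : ℕ) (w : Word) : Prop :=
  ∀ i j, maxRunAt w i j → k ≤ distinctCount (factorAt w i j)

def subseqAt (w : Word) (idx : List ℕ) : Word := idx.map (fun t => w.getD t 0)

def embeds (w : Word) (idx : List ℕ) : Prop :=
  idx.Pairwise (· < ·) ∧ ∀ t ∈ idx, t < w.length

/-- `w` is a plateau-`(k,h)_ξ`-rollercoaster (`ξ = ↑` iff `up = true`):
the last (possibly incomplete) run has orientation `ξ` and exactly `h`
distinct letters if `h < k` (at least `k` if `h = k`), and every other
maximal run is a plateau-`k`-run. -/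
def IsPRCkh (k h : ℕ) (up : Bool) (w : Word) : Prop :=
  w ≠ [] ∧
  ∃ i, i < w.length ∧
    (if up then
        weakIncr (factorAt w i (w.length - 1)) ∧
          (i = 0 ∨ ¬ weakIncr (factorAt w (i - 1) (w.length - 1)))
      else
        weakDecr (factorAt w i (w.length - 1)) ∧
          (i = 0 ∨ ¬ weakDecr (factorAt w (i - 1) (w.length - 1)))) ∧
    (if h < k then distinctCount (factorAt w i (w.length - 1)) = h
      else k ≤ distinctCount (factorAt w i (w.length - 1))) ∧
    ∀ i' j', maxRunAt w i' j' →
      (i' = i ∧ j' = w.length - 1) ∨ k ≤ distinctCount (factorAt w i' j')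

def upEdge (w : Word) (i j : ℕ) : Prop :=
  i < j ∧ j < w.length ∧ w.getD i 0 < w.getD j 0 ∧
  ∀ j', i < j' → j' < j → ¬ (w.getD i 0 ≤ w.getD j' 0 ∧ w.getD j' 0 ≤ w.getD j 0)

def eqEdge (w : Word) (i j : ℕ) : Prop :=
  i < j ∧ j < w.length ∧ w.getD i 0 = w.getD j 0 ∧
  ∀ j', i < j' → j' < j → w.getD j' 0 ≠ w.getD j 0

def downEdge (w : Word) (i j : ℕ) : Prop :=
  i < j ∧ j < w.length ∧ w.getD j 0 < w.getD i 0 ∧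
  ∀ j', i < j' → j' < j → ¬ (w.getD j 0 ≤ w.getD j' 0 ∧ w.getD j' 0 ≤ w.getD i 0)

def negEdge (w : Word) (i j : ℕ) : Prop :=
  upEdge w i j ∨ eqEdge w i j ∨ downEdge w i j

theorem factorAt_append_of_lt {l r : Word} {i j : ℕ} (hj : j < l.length) :
    factorAt (l ++ r) i j = factorAt l i j := by
  unfold factorAt
  rw [List.drop_append, List.take_append, List.length_drop,
    Nat.sub_eq_zero_of_le (by omega : j + 1 - i ≤ l.length - i), List.take_zero, List.append_nil]

theorem factorAt_append_of_length_le {l r : Word} {i j : ℕ} (hi : l.length ≤ i)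
    (hij : i ≤ j) :
    factorAt (l ++ r) i j = factorAt r (i - l.length) (j - l.length) := by
  unfold factorAt
  rw [List.drop_append, List.drop_eq_nil_of_le hi, List.nil_append]
  congr 1
  omega

theorem factorAt_append_of_le_of_le {l r : Word} {i j : ℕ} (hi : i ≤ l.length)
    (hj : l.length ≤ j + 1) :
    factorAt (l ++ r) i j = l.drop i ++ r.take (j + 1 - l.length) := by
  unfold factorAt
  rw [List.drop_append_of_le_length hi, List.take_append, List.length_drop,
    List.take_of_length_le (by simp; omega)]
  congr 2
  omega

def DoublesLetter (u v : Word) : Prop := ∃ p a q, u = p ++ a :: a :: q ∧ v = p ++ a :: q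

theorem isChain_append_cons_cons_iff {α : Type*} {R : α → α → Prop} {a : α} (hR : R a a)
    (p q : List α) : (p ++ a :: a :: q).IsChain R ↔ (p ++ a :: q).IsChain R := by
  rw [List.isChain_append, List.isChain_append, List.isChain_cons_cons]
  simp [hR]

theorem plateauRun_iff_of_reflGen {u v : Word} (h : Relation.ReflGen DoublesLetter u v) :
    plateauRun u ↔ plateauRun v := by
  rcases h with _ | ⟨p, a, q, rfl, rfl⟩
  · rfl
  · exact or_congr (isChain_append_cons_cons_iff le_rfl p q)
      (isChain_append_cons_cons_iff (R := (· ≥ ·)) le_rfl p q)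

theorem distinctCount_eq_of_reflGen {u v : Word} (h : Relation.ReflGen DoublesLetter u v) :
    distinctCount u = distinctCount v := by
  rcases h with _ | ⟨p, a, q, rfl, rfl⟩
  · rfl
  · unfold distinctCount
    rw [← List.card_toFinset, ← List.card_toFinset]
    simp

/-- The position in `x ++ a :: y` of a position in `x ++ a :: a :: y`, where `d = x.length`. -/
def collapse (d p : ℕ) : ℕ := if p ≤ d then p else p - 1

section Doubling

variable {x y : Word} {a : ℕ} {i j : ℕ}

theorem factorAt_double (hij : i ≤ j) :
    Relation.ReflGen DoublesLetter (factorAt (x ++ a :: a :: y) i j)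
      (factorAt (x ++ a :: y) (collapse x.length i) (collapse x.length j)) := by
  unfold collapse
  have hsplit : x ++ a :: a :: y = (x ++ [a]) ++ a :: y := by simp
  have hlen : (x ++ [a]).length = x.length + 1 := by simp
  rcases Nat.lt_or_ge j (x.length + 1) with hj | hj
  · rw [if_pos (by omega), if_pos (by omega), hsplit, show x ++ a :: y = (x ++ [a]) ++ y by simp,
      factorAt_append_of_lt (r := a :: y) (hlen ▸ hj),
      factorAt_append_of_lt (r := y) (hlen ▸ hj)]
  rcases Nat.lt_or_ge x.length i with hi | hi
  · rw [if_neg (by omega), if_neg (by omega), hsplit,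
      factorAt_append_of_length_le (by omega) hij,
      factorAt_append_of_length_le (by omega) (by omega),
      hlen, Nat.sub_sub, Nat.sub_sub, Nat.add_comm 1]
  · rw [if_pos hi, if_neg (by omega), factorAt_append_of_le_of_le hi (by omega),
      factorAt_append_of_le_of_le hi (by omega),
      show j + 1 - x.length = (j - 1 - x.length) + 2 by omega,
      show j - 1 + 1 - x.length = (j - 1 - x.length) + 1 by omega]
    exact .single ⟨x.drop i, a, y.take (j - 1 - x.length), by simp, by simp⟩

theorem plateauRun_factorAt_double_iff (hij : i ≤ j) :
    plateauRun (factorAt (x ++ a :: a :: y) i j) ↔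
      plateauRun (factorAt (x ++ a :: y) (collapse x.length i) (collapse x.length j)) :=
  plateauRun_iff_of_reflGen (factorAt_double hij)

theorem distinctCount_factorAt_double (hij : i ≤ j) :
    distinctCount (factorAt (x ++ a :: a :: y) i j) =
      distinctCount (factorAt (x ++ a :: y) (collapse x.length i) (collapse x.length j)) :=
  distinctCount_eq_of_reflGen (factorAt_double hij)

theorem maxRunAt_collapse (h : maxRunAt (x ++ a :: a :: y) i j) :
    maxRunAt (x ++ a :: y) (collapse x.length i) (collapse x.length j) := by
  obtain ⟨hij, hj, hrun, hleft, hright⟩ := h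
  simp only [List.length_append, List.length_cons] at hj hright
  have hrun' := (plateauRun_factorAt_double_iff hij).mp hrun
  refine ⟨by unfold collapse; split_ifs <;> omega,
    by simp only [List.length_append, List.length_cons]; unfold collapse; split_ifs <;> omega,
    hrun', ?_, ?_⟩
  -- If collapsing identifies the new end of an extended run with the old one, the extension
  -- is a plateau-run too; so in a maximal run it moves the end by exactly one position.
  · rcases hleft with h0 | hnot
    · left; simp [collapse, h0]
    right
    have hstep := plateauRun_factorAt_double_iff (x := x) (y := y) (a := a)
      (show i - 1 ≤ j by omega)
    obtain h | h : collapse x.length (i - 1) = collapse x.length i ∨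
        collapse x.length (i - 1) = collapse x.length i - 1 := by
      unfold collapse; split_ifs <;> omega
    · exact absurd (hstep.mpr (h ▸ hrun')) hnot
    · rwa [← h, ← hstep]
  · rcases hright with hend | hnot
    · left; simp only [List.length_append, List.length_cons]; unfold collapse; split_ifs <;> omega
    right
    have hstep := plateauRun_factorAt_double_iff (x := x) (y := y) (a := a)
      (show i ≤ j + 1 by omega)
    obtain h | h : collapse x.length (j + 1) = collapse x.length j ∨
        collapse x.length (j + 1) = collapse x.length j + 1 := by
      unfold collapse; split_ifs <;> omega
    · exact absurd (hstep.mpr (h ▸ hrun')) hnot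
    · rwa [← h, ← hstep]

theorem IsPlateauRC.double {k : ℕ} (h : IsPlateauRC k (x ++ a :: y)) :
    IsPlateauRC k (x ++ a :: a :: y) := fun i j hv => by
  rw [distinctCount_factorAt_double hv.1]
  exact h _ _ (maxRunAt_collapse hv)

end Doubling

theorem IsPlateauRC.take_add_one_append_drop {k : ℕ} {s : Word} (h : IsPlateauRC k s) {d : ℕ}
    (hd : d < s.length) : IsPlateauRC k (s.take (d + 1) ++ s.drop d) := by
  have hs : s = s.take d ++ s[d] :: s.drop (d + 1) := by
    rw [List.getElem_cons_drop, List.take_append_drop]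
  have hs' : s.take (d + 1) ++ s.drop d = s.take d ++ s[d] :: s[d] :: s.drop (d + 1) := by
    rw [List.take_add_one, List.getElem?_eq_getElem hd, ← List.getElem_cons_drop hd]
    simp only [Option.toList_some, List.append_assoc, List.singleton_append]
  rw [hs] at h
  rw [hs']
  exact h.double

section Embeddings

variable {w : Word} {I J : List ℕ}

theorem subseqAt_sublist (h : embeds w I) : (subseqAt w I).Sublist w := by
  obtain ⟨hI, hbound⟩ := h
  have hfin : subseqAt w I = (I.pmap Fin.mk hbound).map (w[·]) :=
    List.ext_getElem (by simp [subseqAt]) fun n _ _ => by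
      simp [subseqAt, hbound _ (List.getElem_mem _)]
  rw [hfin]
  exact List.map_getElem_sublist ((List.pairwise_pmap hbound).mpr (hI.imp fun h _ _ => h))

theorem exists_embeds_of_sublist {s : Word} (h : s.Sublist w) :
    ∃ I, embeds w I ∧ subseqAt w I = s := by
  obtain ⟨is, rfl, his⟩ := List.sublist_eq_map_getElem h
  exact ⟨is.map (↑), ⟨List.pairwise_map.mpr his, by simp⟩, by simp [subseqAt]⟩

theorem embeds_take_append_drop (hI : embeds w I) (hJ : embeds w J) {d : ℕ}
    (hdI : d < I.length) (hdJ : d < J.length) (hlt : I[d] < J[d]) :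
    embeds w (I.take (d + 1) ++ J.drop d) := by
  refine ⟨List.isChain_iff_pairwise.mp (List.isChain_append.mpr ⟨?_, ?_, ?_⟩), ?_⟩
  · exact List.isChain_iff_pairwise.mpr (hI.1.sublist (List.take_sublist _ _))
  · exact List.isChain_iff_pairwise.mpr (hJ.1.sublist (List.drop_sublist _ _))
  · simp [List.getLast?_take, List.head?_drop, hdI, hdJ, hlt]
  · intro t ht
    rcases List.mem_append.mp ht with ht | ht
    exacts [hI.2 t (List.mem_of_mem_take ht), hJ.2 t (List.mem_of_mem_drop ht)]

theorem subseqAt_take_append_drop (heq : subseqAt w I = subseqAt w J) (d : ℕ) :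
    subseqAt w (I.take (d + 1) ++ J.drop d) =
      (subseqAt w I).take (d + 1) ++ (subseqAt w I).drop d := by
  unfold subseqAt at heq ⊢
  rw [List.map_append, List.map_take, List.map_drop, heq]

theorem getElem_le_of_subseqAt_eq {k m : ℕ}
    (hmax : ∀ s : Word, s.Sublist w → IsPlateauRC k s → s.length ≤ m)
    (hI : embeds w I) (hJ : embeds w J) (hIm : I.length = m)
    (hrc : IsPlateauRC k (subseqAt w I)) (heq : subseqAt w I = subseqAt w J)
    {d : ℕ} (hdI : d < I.length) (hdJ : d < J.length) : I[d] ≤ J[d] := by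
  by_contra! hlt
  have hd : d < (subseqAt w J).length := by simpa [subseqAt] using hdJ
  have hlong := hmax _ (subseqAt_sublist (embeds_take_append_drop hJ hI hdJ hdI hlt))
    (by rw [subseqAt_take_append_drop heq.symm]; exact (heq ▸ hrc).take_add_one_append_drop hd)
  simp only [subseqAt, List.length_map, List.length_append, List.length_take,
    List.length_drop] at hlong
  omega

theorem eq_of_subseqAt_eq {k m : ℕ}
    (hmax : ∀ s : Word, s.Sublist w → IsPlateauRC k s → s.length ≤ m)
    (hI : embeds w I) (hJ : embeds w J) (hIm : I.length = m)
    (hrc : IsPlateauRC k (subseqAt w I)) (heq : subseqAt w I = subseqAt w J) : I = J := by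
  have hlen : I.length = J.length := by simpa [subseqAt] using congrArg List.length heq
  exact List.ext_getElem hlen fun d hdI hdJ =>
    le_antisymm (getElem_le_of_subseqAt_eq hmax hI hJ hIm hrc heq hdI hdJ)
      (getElem_le_of_subseqAt_eq hmax hJ hI (hlen ▸ hIm) (heq ▸ hrc) heq.symm hdJ hdI)

end Embeddings

theorem stmt18_general (w : Word) (k m : ℕ)
    (hmax : ∀ s : Word, s.Sublist w → IsPlateauRC k s → s.length ≤ m) :
    ∃ f : {I : List ℕ // embeds w I ∧ I.length = m ∧
            IsPlateauRC k (subseqAt w I)} ≃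
          {s : Word // s.Sublist w ∧ IsPlateauRC k s ∧ s.length = m},
      ∀ I, (f I : Word) = subseqAt w I := by
  refine ⟨Equiv.ofBijective (fun I => ⟨subseqAt w I, subseqAt_sublist I.2.1, I.2.2.2,
    by simp [subseqAt, I.2.2.1]⟩) ⟨?_, ?_⟩, fun _ => rfl⟩
  · intro ⟨I, hI, hIm, hrc⟩ ⟨J, hJ, _⟩ heq
    exact Subtype.ext (eq_of_subseqAt_eq hmax hI hJ hIm hrc (congrArg Subtype.val heq))
  · rintro ⟨s, hs, hrc, hsm⟩
    obtain ⟨I, hI, rfl⟩ := exists_embeds_of_sublist hs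
    exact ⟨⟨I, hI, by simpa [subseqAt] using hsm, hrc⟩, rfl⟩

/-- the maximum-length plateau-k-rollercoaster subsequences of
`w` are in bijection with the index sequences embedding them, via the map
sending an index sequence to the word it spells. -/
theorem stmt18 (w : Word) (k m : ℕ) (hk : 3 ≤ k)
    (hmax : ∀ s : Word, s.Sublist w → IsPlateauRC k s → s.length ≤ m)
    (hex : ∃ s : Word, s.Sublist w ∧ IsPlateauRC k s ∧ s.length = m) :
    ∃ f : {I : List ℕ // embeds w I ∧ I.length = m ∧
            IsPlateauRC k (subseqAt w I)} ≃
          {s : Word // s.Sublist w ∧ IsPlateauRC k s ∧ s.length = m},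
      ∀ I, (f I : Word) = subseqAt w I :=
  stmt18_general w k m hmax

end RollerCoaster
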